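/- arXiv:2109.06730 — 2 statements merged into one kernel-verified Lean document; each statement's English description precedes it below -/
import Mathlib

section
/- Along any solution (d(t), φ(t)) of the circumnavigation dynamics ḋ = v·cos φ, φ̇ = v(κ₀(1+γ·cos φ) − sin(φ)/d) with constant v > 0, κ₀ > 0, γ > 0 and d(t) > 0 for all t ≥ 0, the function t ↦ V(d(t), φ(t)) is nonincreasing, where V(d, φ) = ½(d − κ₀⁻¹)² + κ₀⁻¹·d·(1 − sin φ). -/
/-! Differentiating `V` along the flow, the terms in `sin φ` and the linear terms in `d` cancel,
leaving `V̇ = -v γ d cos² φ ≤ 0`; the mean value theorem then makes `V` antitone. -/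

open Real

lemma antitoneOn_of_hasDerivAt_nonpos {D : Set ℝ} (hD : Convex ℝ D) {f f' : ℝ → ℝ}
    (hf : ∀ x ∈ D, HasDerivAt f (f' x) x) (hf'₀ : ∀ x ∈ D, f' x ≤ 0) : AntitoneOn f D :=
  antitoneOn_of_hasDerivWithinAt_nonpos hD
    (fun x hx => (hf x hx).continuousAt.continuousWithinAt)
    (fun x hx => (hf x (interior_subset hx)).hasDerivWithinAt)
    (fun x hx => hf'₀ x (interior_subset hx))

noncomputable def circumnavigationLyapunov (κ₀ d φ : ℝ) : ℝ :=
  (1/2) * (d - κ₀⁻¹)^2 + κ₀⁻¹ * d * (1 - sin φ)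

lemma hasDerivAt_circumnavigationLyapunov {κ₀ d' φ' t : ℝ} {d φ : ℝ → ℝ}
    (hd : HasDerivAt d d' t) (hφ : HasDerivAt φ φ' t) :
    HasDerivAt (fun s => circumnavigationLyapunov κ₀ (d s) (φ s))
      ((d t - κ₀⁻¹) * d' + κ₀⁻¹ * (d' * (1 - sin (φ t)) - d t * (cos (φ t) * φ'))) t :=
  ((((hd.sub_const κ₀⁻¹).pow 2).const_mul (1/2 : ℝ)).add
    ((hd.const_mul κ₀⁻¹).mul (hφ.sin.const_sub 1))).congr_deriv (by ring)

lemma circumnavigationLyapunov_deriv_along_flow {v κ₀ γ d φ : ℝ} (hκ : κ₀ ≠ 0) (hd : d ≠ 0) :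
    (d - κ₀⁻¹) * (v * cos φ) + κ₀⁻¹ * (v * cos φ * (1 - sin φ)
        - d * (cos φ * (v * (κ₀ * (1 + γ * cos φ) - sin φ / d))))
      = -(v * γ * d * cos φ ^ 2) := by
  field_simp
  ring

theorem lyapunov_nonincreasing (v κ₀ γ : ℝ) (hv : 0 < v) (hκ : 0 < κ₀) (hγ : 0 < γ)
    (d φ : ℝ → ℝ)
    (hdpos : ∀ t : ℝ, 0 ≤ t → 0 < d t)
    (hd : ∀ t : ℝ, 0 ≤ t → HasDerivAt d (v * Real.cos (φ t)) t)
    (hφ : ∀ t : ℝ, 0 ≤ t →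
      HasDerivAt φ (v * (κ₀ * (1 + γ * Real.cos (φ t)) - Real.sin (φ t) / d t)) t) :
    AntitoneOn (fun t => (1/2) * (d t - κ₀⁻¹)^2 + κ₀⁻¹ * d t * (1 - Real.sin (φ t)))
      (Set.Ici (0:ℝ)) := by
  refine antitoneOn_of_hasDerivAt_nonpos (convex_Ici 0)
    (f' := fun t => -(v * γ * d t * cos (φ t) ^ 2)) (fun t ht => ?_) (fun t ht => ?_)
  · rw [← circumnavigationLyapunov_deriv_along_flow hκ.ne' (hdpos t ht).ne']
    exact hasDerivAt_circumnavigationLyapunov (hd t ht) (hφ t ht)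
  · have hdt := hdpos t ht
    simp only [neg_nonpos]
    positivity
end

section
/- For a solution of the circumnavigation dynamics with v > 0, κ₀ > 0, γ > 0 and d(t) > 0 for all t, if cos(φ(t)) = 0 on an open time interval, then φ is constant on that interval with sin φ = 1 or sin φ = −1, d is constant on that interval, and moreover φ̇ = 0 on the interval forces sin φ = 1 and d = 1/κ₀. -/
lemma const_on_Ioo (f : ℝ → ℝ) (a b : ℝ)
    (h : ∀ t ∈ Set.Ioo a b, HasDerivAt f 0 t) :
    ∀ t₁ ∈ Set.Ioo a b, ∀ t₂ ∈ Set.Ioo a b, f t₁ = f t₂ := by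
  have key : ∀ t₁ ∈ Set.Ioo a b, ∀ t₂ ∈ Set.Ioo a b, t₁ ≤ t₂ → f t₂ = f t₁ := by
    intro t₁ h₁ t₂ h₂ hle
    have hsub : Set.Icc t₁ t₂ ⊆ Set.Ioo a b := fun x hx =>
      ⟨lt_of_lt_of_le h₁.1 hx.1, lt_of_le_of_lt hx.2 h₂.2⟩
    have hcont : ContinuousOn f (Set.Icc t₁ t₂) := fun x hx =>
      ((h x (hsub hx)).continuousAt).continuousWithinAt
    exact constant_of_has_deriv_right_zero hcont
      (fun x hx => (h x (hsub (Set.Ico_subset_Icc_self hx))).hasDerivWithinAt)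
      t₂ (Set.right_mem_Icc.2 hle)
  intro t₁ h₁ t₂ h₂
  rcases le_total t₁ t₂ with hle | hle
  · exact (key t₁ h₁ t₂ h₂ hle).symm
  · exact key t₂ h₂ t₁ h₁ hle

theorem invariant_in_cos_zero (v κ₀ γ : ℝ) (hv : 0 < v) (hκ : 0 < κ₀) (hγ : 0 < γ)
    (d φ : ℝ → ℝ) (a b : ℝ) (hab : a < b)
    (hdpos : ∀ t ∈ Set.Ioo a b, 0 < d t)
    (hd : ∀ t ∈ Set.Ioo a b, HasDerivAt d (v * Real.cos (φ t)) t)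
    (hφ : ∀ t ∈ Set.Ioo a b,
      HasDerivAt φ (v * (κ₀ * (1 + γ * Real.cos (φ t)) - Real.sin (φ t) / d t)) t)
    (hcos : ∀ t ∈ Set.Ioo a b, Real.cos (φ t) = 0) :
    (∀ t₁ ∈ Set.Ioo a b, ∀ t₂ ∈ Set.Ioo a b, φ t₁ = φ t₂ ∧ d t₁ = d t₂) ∧
    (∀ t ∈ Set.Ioo a b, Real.sin (φ t) = 1 ∨ Real.sin (φ t) = -1) ∧
    (∀ t ∈ Set.Ioo a b,
      v * (κ₀ * (1 + γ * Real.cos (φ t)) - Real.sin (φ t) / d t) = 0 →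
      Real.sin (φ t) = 1 ∧ d t = 1/κ₀) := by
  -- sin φ = ±1
  have hsin : ∀ t ∈ Set.Ioo a b, Real.sin (φ t) = 1 ∨ Real.sin (φ t) = -1 := by
    intro t ht
    have h1 : Real.sin (φ t) ^ 2 = 1 := by
      have := Real.sin_sq_add_cos_sq (φ t)
      rw [hcos t ht] at this; nlinarith
    have : (Real.sin (φ t) - 1) * (Real.sin (φ t) + 1) = 0 := by nlinarith
    rcases mul_eq_zero.1 this with h | h
    · left; linarith
    · right; linarith
  -- φ' = 0
  have hφ0 : ∀ t ∈ Set.Ioo a b,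
      v * (κ₀ * (1 + γ * Real.cos (φ t)) - Real.sin (φ t) / d t) = 0 := by
    intro t ht
    have hopen : Set.Ioo a b ∈ nhds t := (isOpen_Ioo).mem_nhds ht
    have hev : (fun s => Real.cos (φ s)) =ᶠ[nhds t] fun _ => (0:ℝ) :=
      Filter.eventually_of_mem hopen (fun s hs => hcos s hs)
    have hc : HasDerivAt (fun s => Real.cos (φ s))
        (-Real.sin (φ t) * (v * (κ₀ * (1 + γ * Real.cos (φ t)) - Real.sin (φ t) / d t))) t :=
      (hφ t ht).cos
    have hz : HasDerivAt (fun s => Real.cos (φ s)) 0 t :=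
      (hasDerivAt_const t (0:ℝ)).congr_of_eventuallyEq hev
    have heq := hc.unique hz
    have hsne : Real.sin (φ t) ≠ 0 := by
      rcases hsin t ht with h | h <;> rw [h] <;> norm_num
    have : -Real.sin (φ t) ≠ 0 := neg_ne_zero.2 hsne
    exact (mul_eq_zero.1 heq).resolve_left this
  refine ⟨?_, hsin, ?_⟩
  · intro t₁ h₁ t₂ h₂
    constructor
    · exact const_on_Ioo φ a b (fun t ht => by
        have := hφ t ht; rwa [hφ0 t ht] at this) t₁ h₁ t₂ h₂
    · exact const_on_Ioo d a b (fun t ht => by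
        have := hd t ht; rwa [hcos t ht, mul_zero] at this) t₁ h₁ t₂ h₂
  · intro t ht h0
    have hc := hcos t ht
    have hdp := hdpos t ht
    have hE : κ₀ = Real.sin (φ t) / d t := by
      have := mul_eq_zero.1 h0
      rcases this with h | h
      · exact absurd h (ne_of_gt hv)
      · rw [hc] at h; nlinarith
    rcases hsin t ht with h | h
    · refine ⟨h, ?_⟩
      rw [h] at hE
      field_simp at hE ⊢
      linarith [mul_comm κ₀ (d t)] 
    · exfalso
      rw [h] at hE
      have : κ₀ < 0 := by
        rw [hE]; exact div_neg_of_neg_of_pos (by norm_num) hdp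
      linarith
end
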